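/- The function F(t) = (1/d) Σ_{j=0}^{d−1} |sin(dt/2) / sin((t − 2jπ/d)/2)| satisfies max_{t∈ℝ} F(t) = O(log d) as d → ∞; i.e., there is a constant M with max_t F(t) ≤ M log(d+1) for all d ≥ 1. -/

import Mathlib

open Real Finset

/-! The kernel is `2π/d`-periodic in `t`, since shifting `t` by `2π/d` permutes the nodes
cyclically, so one may assume `-π/d ≤ t < π/d`. The `j = 0` term is then at most `d`, because
`|sin (d x)| ≤ d |sin x|`. For `1 ≤ j < d` the angle `x = jπ/d - t/2` lies at distance at least
`jπ/(2d)` from `0` and `(d - j)π/(2d)` from `π`, so Jordan's inequality `sin x ≥ 2x/π` bounds the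
term by `d (1/j + 1/(d - j))`. Summing, `F(t) ≤ 1 + 2 H_{d-1} ≤ 3 + 2 log d`. -/

theorem abs_sin_nat_mul_le (n : ℕ) (x : ℝ) : |sin (n * x)| ≤ n * |sin x| := by
  induction n with
  | zero => simp
  | succ n ih =>
    rw [Nat.cast_succ, add_mul, one_mul, sin_add]
    calc |sin (n * x) * cos x + cos (n * x) * sin x|
        ≤ |sin (n * x)| * |cos x| + |cos (n * x)| * |sin x| := by
          rw [← abs_mul, ← abs_mul]; exact abs_add_le _ _
      _ ≤ n * |sin x| * 1 + 1 * |sin x| := by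
          gcongr <;> exact abs_cos_le_one _
      _ = (n + 1) * |sin x| := by ring

theorem abs_sin_nat_mul_div_sin_le (n : ℕ) (x : ℝ) : |sin (n * x) / sin x| ≤ n := by
  rcases eq_or_ne (sin x) 0 with hx | hx
  · simp [hx]
  · rw [abs_div, div_le_iff₀ (abs_pos.2 hx)]
    exact abs_sin_nat_mul_le n x

theorem inv_sin_le {x : ℝ} (hx₀ : 0 < x) (hxπ : x < π) :
    (sin x)⁻¹ ≤ π / 2 * (x⁻¹ + (π - x)⁻¹) := by
  have hπx : 0 < π - x := by linarith
  rcases le_total x (π / 2) with hx | hx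
  · have hsin : 2 / π * x ≤ sin x := mul_le_sin hx₀.le hx
    calc (sin x)⁻¹ ≤ (2 / π * x)⁻¹ := inv_anti₀ (by positivity) hsin
      _ = π / 2 * x⁻¹ := by field_simp
      _ ≤ π / 2 * (x⁻¹ + (π - x)⁻¹) := by gcongr; linarith [inv_pos.2 hπx]
  · have hsin : 2 / π * (π - x) ≤ sin x := by
      rw [← sin_pi_sub]; exact mul_le_sin hπx.le (by linarith)
    calc (sin x)⁻¹ ≤ (2 / π * (π - x))⁻¹ := inv_anti₀ (by positivity) hsin
      _ = π / 2 * (π - x)⁻¹ := by field_simp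
      _ ≤ π / 2 * (x⁻¹ + (π - x)⁻¹) := by gcongr; linarith [inv_pos.2 hx₀]

theorem sum_Ico_one_inv_sub (d : ℕ) :
    ∑ j ∈ Ico 1 d, ((d : ℝ) - j)⁻¹ = ∑ j ∈ Ico 1 d, (j : ℝ)⁻¹ := by
  calc ∑ j ∈ Ico 1 d, ((d : ℝ) - j)⁻¹ = ∑ j ∈ Ico 1 d, (((d - j : ℕ) : ℝ))⁻¹ :=
        sum_congr rfl fun j hj => by rw [Nat.cast_sub (mem_Ico.1 hj).2.le]
    _ = ∑ j ∈ Ico 1 d, (j : ℝ)⁻¹ := by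
        rw [sum_Ico_reflect (fun j => (j : ℝ)⁻¹) 1 (Nat.le_succ d), Nat.add_sub_cancel,
          Nat.add_sub_cancel_left]

theorem sum_Ico_one_inv_le_one_add_log (d : ℕ) :
    ∑ j ∈ Ico 1 d, (j : ℝ)⁻¹ ≤ 1 + log d := by
  calc ∑ j ∈ Ico 1 d, (j : ℝ)⁻¹ ≤ ∑ j ∈ Icc 1 d, (j : ℝ)⁻¹ :=
        sum_le_sum_of_subset_of_nonneg Ico_subset_Icc_self fun _ _ _ => by positivity
    _ = harmonic d := by simp [harmonic_eq_sum_Icc]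
    _ ≤ 1 + log d := harmonic_le_one_add_log d

noncomputable def lebesgueFunction (d : ℕ) (t : ℝ) : ℝ :=
  (1 / d) * ∑ j ∈ range d, |sin (d * t / 2) / sin ((t - 2 * j * π / d) / 2)|

theorem lebesgueFunction_periodic {d : ℕ} (hd : d ≠ 0) :
    Function.Periodic (lebesgueFunction d) (2 * π / d) := by
  intro t
  obtain ⟨n, rfl⟩ := Nat.exists_eq_add_one_of_ne_zero hd
  have h_num : ((n + 1 : ℕ) : ℝ) * (t + 2 * π / (n + 1 : ℕ)) / 2 = (n + 1 : ℕ) * t / 2 + π := by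
    field_simp
  have h_succ (j : ℕ) : (t + 2 * π / (n + 1 : ℕ) - 2 * (j + 1 : ℕ) * π / (n + 1 : ℕ)) / 2
      = (t - 2 * j * π / (n + 1 : ℕ)) / 2 := by
    push_cast; field_simp; ring
  have h_zero : (t + 2 * π / (n + 1 : ℕ) - 2 * (0 : ℕ) * π / (n + 1 : ℕ)) / 2
      = (t - 2 * n * π / (n + 1 : ℕ)) / 2 + π := by
    push_cast; field_simp; ring
  unfold lebesgueFunction
  rw [sum_range_succ', sum_range_succ, h_num, h_zero]
  simp only [h_succ, sin_add_pi, neg_div, div_neg, neg_neg, abs_neg]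

theorem abs_sin_div_sin_le_of_mem_Ico {d j : ℕ} {t : ℝ} (ht : t ∈ Set.Ico (-π / d) (π / d))
    (hj : j ∈ Ico 1 d) :
    |sin (d * t / 2) / sin ((t - 2 * j * π / d) / 2)| ≤ d * ((j : ℝ)⁻¹ + ((d : ℝ) - j)⁻¹) := by
  obtain ⟨ht₁, ht₂⟩ := ht
  obtain ⟨hj₁, hj₂⟩ := mem_Ico.1 hj
  have hd : (0 : ℝ) < d := by exact_mod_cast (zero_lt_one.trans_le hj₁).trans hj₂
  have hj₀ : (1 : ℝ) ≤ j := by exact_mod_cast hj₁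
  have hdj : (1 : ℝ) ≤ d - j := by
    rw [le_sub_iff_add_le']; exact_mod_cast hj₂
  rw [lt_div_iff₀ hd] at ht₂
  rw [div_le_iff₀ hd] at ht₁
  set x := j * π / d - t / 2 with hx
  have hx₀ : j * π / (2 * d) ≤ x := by
    rw [hx, div_le_iff₀ (by positivity)]; field_simp; nlinarith [pi_pos]
  have hxπ : (d - j) * π / (2 * d) ≤ π - x := by
    rw [hx, div_le_iff₀ (by positivity)]; field_simp; nlinarith [pi_pos]
  have hx_pos : 0 < x := lt_of_lt_of_le (by positivity) hx₀
  have hπx_pos : 0 < π - x := lt_of_lt_of_le (by positivity) hxπ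
  have hsin_pos : 0 < sin x := sin_pos_of_pos_of_lt_pi hx_pos (by linarith)
  have h_arg : (t - 2 * j * π / d) / 2 = -x := by rw [hx]; ring
  rw [h_arg, sin_neg, div_neg, abs_neg, abs_div, abs_of_pos hsin_pos, div_eq_mul_inv]
  calc |sin (d * t / 2)| * (sin x)⁻¹ ≤ (sin x)⁻¹ :=
        mul_le_of_le_one_left (inv_nonneg.2 hsin_pos.le) (abs_sin_le_one _)
    _ ≤ π / 2 * (x⁻¹ + (π - x)⁻¹) := inv_sin_le hx_pos (by linarith)
    _ ≤ π / 2 * ((j * π / (2 * d))⁻¹ + ((d - j) * π / (2 * d))⁻¹) := by gcongr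
    _ = d * ((j : ℝ)⁻¹ + ((d : ℝ) - j)⁻¹) := by field_simp

theorem lebesgueFunction_le_of_mem_Ico {d : ℕ} (hd : d ≠ 0) {t : ℝ}
    (ht : t ∈ Set.Ico (-π / d) (π / d)) : lebesgueFunction d t ≤ 3 + 2 * log d := by
  have hd₀ : (0 : ℝ) < d := by positivity
  have h_sum : ∑ j ∈ range d, |sin (d * t / 2) / sin ((t - 2 * j * π / d) / 2)|
      ≤ d * (3 + 2 * log d) := by
    rw [range_eq_Ico, sum_eq_sum_Ico_succ_bot (Nat.pos_of_ne_zero hd)]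
    have h_zero : |sin (d * t / 2) / sin ((t - 2 * (0 : ℕ) * π / d) / 2)| ≤ d := by
      simpa [mul_div_assoc] using abs_sin_nat_mul_div_sin_le d (t / 2)
    have h_rest := sum_le_sum fun j hj => abs_sin_div_sin_le_of_mem_Ico ht hj
    rw [← mul_sum, sum_add_distrib, sum_Ico_one_inv_sub] at h_rest
    have h_log := sum_Ico_one_inv_le_one_add_log d
    linarith [mul_le_mul_of_nonneg_left h_log hd₀.le]
  unfold lebesgueFunction
  rw [one_div_mul_eq_div, div_le_iff₀' hd₀]
  exact h_sum

theorem lebesgueFunction_le {d : ℕ} (hd : d ≠ 0) (t : ℝ) :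
    lebesgueFunction d t ≤ 3 + 2 * log d := by
  obtain ⟨t', ht', h_eq⟩ :=
    (lebesgueFunction_periodic hd).exists_mem_Ico (by positivity) t (-π / d)
  rw [show -π / d + 2 * π / d = π / d by ring] at ht'
  exact h_eq ▸ lebesgueFunction_le_of_mem_Ico hd ht'

theorem roots_of_unity_lebesgue_log_bound :
    ∃ M : ℝ, ∀ d : ℕ, 1 ≤ d → ∀ t : ℝ,
      (1 / d) * ∑ j ∈ Finset.range d,
        |Real.sin (d * t / 2) / Real.sin ((t - 2 * j * π / d) / 2)| ≤
      M * Real.log (d + 1) := by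
  refine ⟨7, fun d hd t => ?_⟩
  have h_log₂ : 0.6 < log (d + 1) := by
    have : log 2 ≤ log (d + 1) := log_le_log two_pos (by norm_cast; omega)
    linarith [log_two_gt_d9]
  have h_log : log d ≤ log (d + 1) := log_le_log (by positivity) (by linarith)
  calc lebesgueFunction d t ≤ 3 + 2 * log d :=
        lebesgueFunction_le (Nat.one_le_iff_ne_zero.1 hd) t
    _ ≤ 7 * log (d + 1) := by linarith
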